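/- Let (δ_t) be i.i.d. real random variables with E[e^{ω₀ δ₁}] = 1 for some ω₀ > 0, and define s₀ = 0, s_t = max(s_{t−1} + δ_t, 0). Then for every t and every threshold h > 0, P(s_t ≥ h) ≤ e^{−ω₀ h}. -/

import Mathlib

open MeasureTheory ProbabilityTheory Real

/-! For `h > 0`, `s_{t+1} ≥ h` exactly when `s_t + δ_{t+1} ≥ h`, and `s_t` is a function of
`δ_1, …, δ_t`, hence independent of `δ_{t+1}`. So the tail bound propagates by induction on `t`:
conditionally on `δ_{t+1} = a`, `P(s_t ≥ h - a) ≤ e^{-ω₀(h - a)}`, and integrating over `a` gives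
`e^{-ω₀h} E[e^{ω₀δ}] = e^{-ω₀h}`. -/

section

variable {Ω : Type*} [MeasurableSpace Ω] {μ : Measure Ω}

lemma prob_le_ofReal_exp_neg_mul_of_nonpos [IsProbabilityMeasure μ] {ω h : ℝ} (hω : 0 ≤ ω)
    (hh : h ≤ 0) (A : Set Ω) : μ A ≤ ENNReal.ofReal (exp (-ω * h)) :=
  prob_le_one.trans (ENNReal.one_le_ofReal.mpr (one_le_exp (by nlinarith)))

lemma ProbabilityTheory.IndepFun.measure_add_ge_le_exp_neg_mul [IsProbabilityMeasure μ]
    {X Y : Ω → ℝ} (hXY : IndepFun X Y μ) (hX : Measurable X) (hY : Measurable Y) {ω : ℝ}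
    (hω : 0 ≤ ω) (hmgf : mgf X μ ω = 1)
    (htail : ∀ g, 0 < g → μ {x | g ≤ Y x} ≤ ENNReal.ofReal (exp (-ω * g)))
    (h : ℝ) : μ {x | h ≤ X x + Y x} ≤ ENNReal.ofReal (exp (-ω * h)) := by
  have htail' (g : ℝ) : μ {x | g ≤ Y x} ≤ ENNReal.ofReal (exp (-ω * g)) :=
    (le_or_gt g 0).elim (fun hg => prob_le_ofReal_exp_neg_mul_of_nonpos hω hg _) (htail g)
  have hint : Integrable (fun x => exp (ω * X x)) μ := by
    by_contra hI
    simp [mgf, integral_undef hI] at hmgf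
  have hE : Measurable fun a : ℝ => ENNReal.ofReal (exp (ω * a)) := by fun_prop
  have hset : MeasurableSet {p : ℝ × ℝ | h ≤ p.1 + p.2} :=
    measurableSet_le measurable_const (measurable_fst.add measurable_snd)
  have hjoint : μ {x | h ≤ X x + Y x} = ∫⁻ a, μ {x | h - a ≤ Y x} ∂(μ.map X) := by
    rw [show {x | h ≤ X x + Y x} = (fun x => (X x, Y x)) ⁻¹' {p : ℝ × ℝ | h ≤ p.1 + p.2} from rfl,
      ← Measure.map_apply (hX.prodMk hY) hset,
      (indepFun_iff_map_prod_eq_prod_map_map hX.aemeasurable hY.aemeasurable).mp hXY,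
      Measure.prod_apply hset]
    refine lintegral_congr fun a => ?_
    have hslice : Prod.mk a ⁻¹' {p : ℝ × ℝ | h ≤ p.1 + p.2} = Set.Ici (h - a) := by
      ext y
      exact (sub_le_iff_le_add' (a := h) (b := a) (c := y)).symm
    rw [hslice, Measure.map_apply hY measurableSet_Ici]
    rfl
  calc μ {x | h ≤ X x + Y x}
      ≤ ∫⁻ a, ENNReal.ofReal (exp (-ω * h)) * ENNReal.ofReal (exp (ω * a)) ∂(μ.map X) := by
        rw [hjoint]
        refine lintegral_mono fun a => (htail' (h - a)).trans_eq ?_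
        rw [← ENNReal.ofReal_mul (exp_nonneg _), ← exp_add]
        ring_nf
    _ = ENNReal.ofReal (exp (-ω * h)) * ENNReal.ofReal (mgf X μ ω) := by
        rw [lintegral_const_mul _ hE, lintegral_map hE hX, mgf,
          ofReal_integral_eq_lintegral_ofReal hint (ae_of_all _ fun _ => exp_nonneg _)]
    _ = ENNReal.ofReal (exp (-ω * h)) := by rw [hmgf, ENNReal.ofReal_one, mul_one]

lemma ProbabilityTheory.iIndepFun.indepFun_of_measurable_natural {ι β γ : Type*} [Preorder ι]
    [TopologicalSpace β] [TopologicalSpace.MetrizableSpace β] [MeasurableSpace β] [BorelSpace β]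
    [MeasurableSpace γ] {δ : ι → Ω → β} (hδ : ∀ i, StronglyMeasurable (δ i))
    (hindep : iIndepFun δ μ) {t i : ι} (hti : t < i) {Y : Ω → γ}
    (hY : Measurable[Filtration.natural δ hδ t] Y) : IndepFun Y (δ i) μ := by
  rw [IndepFun_iff_Indep]
  have hdisj : Disjoint (Set.Iic t) {i} := Set.disjoint_singleton_right.mpr hti.not_ge
  refine indep_of_indep_of_le
    (indep_iSup_of_disjoint (fun j => (hδ j).measurable.comap_le) hindep hdisj) hY.comap_le ?_
  exact le_iSup₂ (f := fun j (_ : j ∈ ({i} : Set ι)) => MeasurableSpace.comap (δ j) inferInstance)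
    i rfl

lemma adapted_cusum {ℱ : Filtration ℕ ‹MeasurableSpace Ω›} {δ s : ℕ → Ω → ℝ} (hδ : Adapted ℱ δ)
    (h0 : ∀ x, s 0 x = 0) (hrec : ∀ t x, s (t + 1) x = max (s t x + δ (t + 1) x) 0) :
    Adapted ℱ s := by
  intro t
  induction t with
  | zero => simp [funext h0]
  | succ t ih =>
    rw [funext (hrec t)]
    exact ((ih.mono (ℱ.mono t.le_succ) le_rfl).add (hδ (t + 1))).max measurable_const

end

/-- Exponential bound on the tail of the CUSUM statistic driven by i.i.d.
increments whose m.g.f. equals 1 at ω₀ > 0. -/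
theorem cusum_tail_bound {Ω : Type*} [MeasurableSpace Ω] (μ : Measure Ω)
    [IsProbabilityMeasure μ] (δ : ℕ → Ω → ℝ) (hmeas : ∀ i, Measurable (δ i))
    (hindep : iIndepFun δ μ)
    (hident : ∀ i, IdentDistrib (δ i) (δ 0) μ μ)
    (ω₀ : ℝ) (hω₀ : 0 < ω₀)
    (hmgf : ∫ x, Real.exp (ω₀ * δ 0 x) ∂μ = 1)
    (s : ℕ → Ω → ℝ) (h0 : ∀ x, s 0 x = 0)
    (hrec : ∀ t x, s (t + 1) x = max (s t x + δ (t + 1) x) 0) :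
    ∀ (t : ℕ) (h : ℝ), 0 < h →
      μ {x | h ≤ s t x} ≤ ENNReal.ofReal (Real.exp (-ω₀ * h)) := by
  have hδ : ∀ i, StronglyMeasurable (δ i) := fun i => (hmeas i).stronglyMeasurable
  have hs : Adapted (Filtration.natural δ hδ) s :=
    adapted_cusum (Filtration.stronglyAdapted_natural hδ).adapted h0 hrec
  intro t h hh
  induction t generalizing h with
  | zero => simp [h0, hh.not_ge]
  | succ t ih =>
    have hevent : {x | h ≤ s (t + 1) x} = {x | h ≤ δ (t + 1) x + s t x} := by
      ext x
      simp [hrec, hh.not_ge, add_comm]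
    have hindep_step : IndepFun (δ (t + 1)) (s t) μ :=
      (hindep.indepFun_of_measurable_natural hδ t.lt_succ_self (hs t)).symm
    have hmgf_step : mgf (δ (t + 1)) μ ω₀ = 1 :=
      (mgf_congr_of_identDistrib _ _ (hident _) ω₀).trans hmgf
    rw [hevent]
    exact hindep_step.measure_add_ge_le_exp_neg_mul (hmeas _) hs.measurable hω₀.le hmgf_step ih h
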